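/- arXiv:1509.01108 — 7 statements merged into one kernel-verified Lean document; each statement's English description precedes it below -/
import Mathlib

section
/- Every characterized subgroup of a topological abelian group X has index at most the cardinality of the continuum: if H = s_v(X) for a sequence v of characters of X, then [X : H] ≤ 𝔠. -/
/-!
A characterized subgroup `H` contains the kernel of `x ↦ (v n x)ₙ : X → (ℕ → 𝕋)`, so `X ⧸ H` is a
quotient of `X ⧸ ker ≅ range ⊆ ℕ → 𝕋`, a set of cardinality `𝔠 ^ ℵ₀ = 𝔠`.
-/

open Filter Topology

abbrev 𝕋 : Type := AddCircle (1 : ℝ)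

open Cardinal

universe u

theorem Cardinal.mk_quotient_le_of_ker_le {G G' : Type u} [AddGroup G] [AddGroup G']
    (f : G →+ G') {H : AddSubgroup G} (h : f.ker ≤ H) : #(G ⧸ H) ≤ #G' := by
  have hsurj : Function.Surjective (AddSubgroup.quotientMapOfLE h) := by
    rintro ⟨x⟩
    exact ⟨QuotientAddGroup.mk x, rfl⟩
  calc #(G ⧸ H) ≤ #(G ⧸ f.ker) := mk_le_of_surjective hsurj
    _ = #f.range := mk_congr (QuotientAddGroup.quotientKerEquivRange f).toEquiv
    _ ≤ #G' := mk_subtype_le _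

theorem Cardinal.mk_nat_arrow_addCircle_le_continuum : #(ℕ → 𝕋) ≤ 𝔠 :=
  calc #(ℕ → 𝕋) = #𝕋 ^ ℵ₀ := by rw [mk_arrow, mk_nat, lift_id, lift_uzero]
    _ ≤ 𝔠 ^ ℵ₀ := power_le_power_right (mk_real ▸ mk_quotient_le)
    _ = 𝔠 := continuum_power_aleph0

theorem characterized_index_le_continuum_general (X : Type) [AddCommGroup X] [TopologicalSpace X]
    (v : ℕ → ContinuousAddMonoidHom X 𝕋) (H : AddSubgroup X)
    (hH : (H : Set X) = {x : X | Tendsto (fun n => v n x) atTop (𝓝 0)}) :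
    Cardinal.mk (X ⧸ H) ≤ Cardinal.continuum := by
  let evalSeq : X →+ (ℕ → 𝕋) := AddMonoidHom.pi fun n => (v n : X →+ 𝕋)
  have hker : evalSeq.ker ≤ H := fun x hx => by
    have hvx : (fun n => v n x) = 0 := hx
    rw [← SetLike.mem_coe, hH, Set.mem_ofPred_eq, hvx]
    exact tendsto_const_nhds
  exact (mk_quotient_le_of_ker_le evalSeq hker).trans mk_nat_arrow_addCircle_le_continuum

/-- Every characterized subgroup has index at most the continuum. -/
theorem characterized_index_le_continuum (X : Type) [AddCommGroup X] [TopologicalSpace X]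
    [IsTopologicalAddGroup X] (v : ℕ → ContinuousAddMonoidHom X 𝕋) (H : AddSubgroup X)
    (hH : (H : Set X) = {x : X | Tendsto (fun n => v n x) atTop (𝓝 0)}) :
    Cardinal.mk (X ⧸ H) ≤ Cardinal.continuum :=
  characterized_index_le_continuum_general X v H hH
end

section
/- Let X be a topological abelian group, F a closed subgroup of X, and π : X → X/F the canonical projection. If H is a characterized subgroup of X/F, then π^{-1}(H) is a characterized subgroup of X. -/
open Filter Topology

def AddSubgroup.IsCharacterized {Y : Type*} [AddCommGroup Y] [TopologicalSpace Y]
    (H : AddSubgroup Y) : Prop :=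
  ∃ u : ℕ → ContinuousAddMonoidHom Y 𝕋, ∀ y : Y, y ∈ H ↔ Tendsto (fun n => u n y) atTop (𝓝 0)

theorem AddSubgroup.IsCharacterized.comap {X Y : Type*} [AddCommGroup X] [TopologicalSpace X]
    [AddCommGroup Y] [TopologicalSpace Y] {H : AddSubgroup Y} (hH : H.IsCharacterized)
    (f : ContinuousAddMonoidHom X Y) : (H.comap f.toAddMonoidHom).IsCharacterized := by
  obtain ⟨u, hu⟩ := hH
  exact ⟨fun n => (u n).comp f, fun x => hu (f x)⟩

theorem preimage_characterized_general (X : Type) [AddCommGroup X] [TopologicalSpace X]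
    (F : AddSubgroup X)
    (H : AddSubgroup (X ⧸ F))
    (hH : ∃ u : ℕ → ContinuousAddMonoidHom (X ⧸ F) 𝕋,
      ∀ y : X ⧸ F, y ∈ H ↔ Tendsto (fun n => u n y) atTop (𝓝 0)) :
    ∃ v : ℕ → ContinuousAddMonoidHom X 𝕋,
      ∀ x : X, x ∈ H.comap (QuotientAddGroup.mk' F) ↔
        Tendsto (fun n => v n x) atTop (𝓝 0) :=
  AddSubgroup.IsCharacterized.comap hH ⟨QuotientAddGroup.mk' F, continuous_quot_mk⟩

/-- Preimages of characterized subgroups of quotients are characterized. -/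
theorem preimage_characterized (X : Type) [AddCommGroup X] [TopologicalSpace X]
    [IsTopologicalAddGroup X] (F : AddSubgroup X) (hF : IsClosed (F : Set X))
    (H : AddSubgroup (X ⧸ F))
    (hH : ∃ u : ℕ → ContinuousAddMonoidHom (X ⧸ F) 𝕋,
      ∀ y : X ⧸ F, y ∈ H ↔ Tendsto (fun n => u n y) atTop (𝓝 0)) :
    ∃ v : ℕ → ContinuousAddMonoidHom X 𝕋,
      ∀ x : X, x ∈ H.comap (QuotientAddGroup.mk' F) ↔
        Tendsto (fun n => v n x) atTop (𝓝 0) :=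
  preimage_characterized_general X F H hH
end

section
/- Let X be a compact abelian group and v a sequence of characters of X. If s_v(X) = X, then v is eventually null (v_n = 0 for all sufficiently large n). -/
open Filter Topology
open MeasureTheory

/-!
Integrate the characters, viewed as maps into the unit circle of `ℂ`, against a Haar measure `μ`
of `X`. By invariance of `μ`, the integral of a nontrivial character vanishes, while pointwise
convergence `v n → 0` and dominated convergence make the integrals tend to `μ X ≠ 0`. Hence
eventually `v n` is trivial.
-/

theorem integral_toCircle_eq_zero_of_ne_zero {X : Type*} [AddGroup X] [MeasurableSpace X]
    [MeasurableAdd X] (μ : Measure X) [μ.IsAddLeftInvariant] {χ : X →+ 𝕋} (hχ : χ ≠ 0) :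
    ∫ x, (AddCircle.toCircle (χ x) : ℂ) ∂μ = 0 := by
  set I := ∫ x, (AddCircle.toCircle (χ x) : ℂ) ∂μ
  obtain ⟨t, ht⟩ : ∃ t, χ t ≠ 0 := by
    by_contra! hall
    exact hχ (AddMonoidHom.ext hall)
  have hχt : (AddCircle.toCircle (χ t) : ℂ) ≠ 1 := by
    rw [ne_eq, Circle.coe_eq_one, ← AddCircle.toCircle_zero]
    exact (AddCircle.injective_toCircle one_ne_zero).ne ht
  have hinv : I = AddCircle.toCircle (χ t) * I := by
    simp only [I]
    conv_lhs => rw [← integral_add_left_eq_self _ t]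
    simp only [map_add, AddCircle.toCircle_add, Circle.coe_mul, integral_const_mul]
  have hfactor : (1 - (AddCircle.toCircle (χ t) : ℂ)) * I = 0 := by
    linear_combination hinv
  exact (mul_eq_zero.mp hfactor).resolve_left (sub_ne_zero.mpr hχt.symm)

theorem tendsto_integral_toCircle_of_tendsto_zero {X : Type*} [MeasurableSpace X]
    (μ : Measure X) [IsFiniteMeasure μ] {f : ℕ → X → 𝕋} (hf : ∀ n, Measurable (f n))
    (hlim : ∀ x, Tendsto (fun n => f n x) atTop (𝓝 0)) :
    Tendsto (fun n => ∫ x, (AddCircle.toCircle (f n x) : ℂ) ∂μ) atTop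
      (𝓝 (μ.real Set.univ)) := by
  have hcont : Continuous fun z : 𝕋 => (AddCircle.toCircle z : ℂ) :=
    continuous_subtype_val.comp AddCircle.continuous_toCircle
  have hconst : ∫ _x, (1 : ℂ) ∂μ = μ.real Set.univ := by simp
  rw [← hconst]
  refine tendsto_integral_of_dominated_convergence (fun _ => 1)
    (fun n => (hcont.measurable.comp (hf n)).aestronglyMeasurable) (integrable_const 1)
    (fun _ => ae_of_all _ fun _ => (Circle.norm_coe _).le) (ae_of_all _ fun x => ?_)
  simpa [Function.comp_def] using (hcont.tendsto 0).comp (hlim x)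

theorem compact_sv_eq_top_eventually_null_general (X : Type) [AddCommGroup X] [TopologicalSpace X]
    [IsTopologicalAddGroup X] [CompactSpace X]
    (v : ℕ → ContinuousAddMonoidHom X 𝕋)
    (h : ∀ x : X, Tendsto (fun n => v n x) atTop (𝓝 0)) :
    ∃ N : ℕ, ∀ n ≥ N, v n = 0 := by
  borelize X
  let μ : Measure X := Measure.addHaar
  have hlim := tendsto_integral_toCircle_of_tendsto_zero μ (fun n => (v n).continuous.measurable) h
  have hμ : (μ.real Set.univ : ℂ) ≠ 0 := Complex.ofReal_ne_zero.mpr measureReal_univ_pos.ne'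
  obtain ⟨N, hN⟩ := eventually_atTop.mp (hlim.eventually_ne hμ)
  exact ⟨N, fun n hn => by_contra fun hv => hN n hn (integral_toCircle_eq_zero_of_ne_zero μ
    (ContinuousAddMonoidHom.toAddMonoidHom_injective.ne hv))⟩

/-- If `s_v(X) = X` for a compact abelian group `X`, then `v` is eventually null. -/
theorem compact_sv_eq_top_eventually_null (X : Type) [AddCommGroup X] [TopologicalSpace X]
    [IsTopologicalAddGroup X] [CompactSpace X] [T2Space X]
    (v : ℕ → ContinuousAddMonoidHom X 𝕋)
    (h : ∀ x : X, Tendsto (fun n => v n x) atTop (𝓝 0)) :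
    ∃ N : ℕ, ∀ n ≥ N, v n = 0 :=
  compact_sv_eq_top_eventually_null_general X v h
end

section
/- Let X be a topological abelian group and H a dense subgroup of X. If X is autocharacterized, then H (with the subspace topology) is autocharacterized. -/
open Filter Topology

namespace ContinuousAddMonoidHom

variable {X Y : Type*} [AddGroup X] [TopologicalSpace X] [AddMonoid Y] [TopologicalSpace Y]

def restrictAddSubgroup (f : ContinuousAddMonoidHom X Y) (H : AddSubgroup X) :
    ContinuousAddMonoidHom H Y :=
  f.comp ⟨H.subtype, continuous_subtype_val⟩

theorem eq_zero_of_restrictAddSubgroup_eq_zero [T2Space Y] {H : AddSubgroup X}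
    (hd : Dense (H : Set X)) {f : ContinuousAddMonoidHom X Y} (hf : f.restrictAddSubgroup H = 0) :
    f = 0 := by
  have hvanish : Set.EqOn f 0 H := fun x hx => DFunLike.congr_fun hf ⟨x, hx⟩
  exact DFunLike.coe_injective (Continuous.ext_on hd f.continuous continuous_const hvanish)

end ContinuousAddMonoidHom

theorem dense_subgroup_autocharacterized_general (X : Type) [AddCommGroup X] [TopologicalSpace X]
    (H : AddSubgroup X) (hd : Dense (H : Set X))
    (hX : ∃ v : ℕ → ContinuousAddMonoidHom X 𝕋,
      (¬ ∃ N : ℕ, ∀ n ≥ N, v n = 0) ∧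
        ∀ x : X, Tendsto (fun n => v n x) atTop (𝓝 0)) :
    ∃ u : ℕ → ContinuousAddMonoidHom H 𝕋,
      (¬ ∃ N : ℕ, ∀ n ≥ N, u n = 0) ∧
        ∀ h : H, Tendsto (fun n => u n h) atTop (𝓝 0) := by
  obtain ⟨v, hv_not_null, hv_tendsto⟩ := hX
  refine ⟨fun n => (v n).restrictAddSubgroup H, ?_, fun h => hv_tendsto h⟩
  rintro ⟨N, hN⟩
  exact hv_not_null
    ⟨N, fun n hn => ContinuousAddMonoidHom.eq_zero_of_restrictAddSubgroup_eq_zero hd (hN n hn)⟩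

/-- A dense subgroup of an autocharacterized group is autocharacterized. -/
theorem dense_subgroup_autocharacterized (X : Type) [AddCommGroup X] [TopologicalSpace X]
    [IsTopologicalAddGroup X] (H : AddSubgroup X) (hd : Dense (H : Set X))
    (hX : ∃ v : ℕ → ContinuousAddMonoidHom X 𝕋,
      (¬ ∃ N : ℕ, ∀ n ≥ N, v n = 0) ∧
        ∀ x : X, Tendsto (fun n => v n x) atTop (𝓝 0)) :
    ∃ u : ℕ → ContinuousAddMonoidHom H 𝕋,
      (¬ ∃ N : ℕ, ∀ n ≥ N, u n = 0) ∧
        ∀ h : H, Tendsto (fun n => u n h) atTop (𝓝 0) :=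
  dense_subgroup_autocharacterized_general X H hd hX
end

section
/- Let X be a topological abelian group and H an autocharacterized subgroup of X which is a topological direct summand of X (X ≅ H × Z topologically for some subgroup Z). Then X is autocharacterized. -/
open Filter Topology

/-! Pulling the characters of `H` back along the continuous surjection `X → H × Z → H` gives
characters of `X`; precomposition with a surjection preserves both being nonzero and converging
pointwise to `0`. -/

def IsAutocharacterized (Y : Type) [AddCommGroup Y] [TopologicalSpace Y] : Prop :=
  ∃ v : ℕ → ContinuousAddMonoidHom Y 𝕋,
    (¬ ∃ N : ℕ, ∀ n ≥ N, v n = 0) ∧ ∀ y : Y, Tendsto (fun n => v n y) atTop (𝓝 0)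

theorem ContinuousAddMonoidHom.comp_eq_zero_of_surjective {X Y A : Type} [AddCommGroup X]
    [TopologicalSpace X] [AddCommGroup Y] [TopologicalSpace Y] [AddCommGroup A]
    [TopologicalSpace A] {f : ContinuousAddMonoidHom X Y} (hf : Function.Surjective f)
    {g : ContinuousAddMonoidHom Y A} (hg : g.comp f = 0) : g = 0 := by
  ext y
  obtain ⟨x, rfl⟩ := hf y
  exact DFunLike.congr_fun hg x

theorem IsAutocharacterized.of_surjective {X Y : Type} [AddCommGroup X] [TopologicalSpace X]
    [AddCommGroup Y] [TopologicalSpace Y] (f : ContinuousAddMonoidHom X Y)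
    (hf : Function.Surjective f) (hY : IsAutocharacterized Y) : IsAutocharacterized X := by
  obtain ⟨v, hv_ne, hv_lim⟩ := hY
  refine ⟨fun n => (v n).comp f, fun ⟨N, hN⟩ => hv_ne ⟨N, fun n hn => ?_⟩, fun x => hv_lim (f x)⟩
  exact ContinuousAddMonoidHom.comp_eq_zero_of_surjective hf (hN n hn)

theorem summand_autocharacterized_general (X : Type) [AddCommGroup X] [TopologicalSpace X]
    (H Z : AddSubgroup X)
    (e : X ≃+ (H × Z)) (he : Continuous e)
    (heH : ∀ h : H, e (h : X) = (h, 0))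
    (hH : ∃ v : ℕ → ContinuousAddMonoidHom H 𝕋,
      (¬ ∃ N : ℕ, ∀ n ≥ N, v n = 0) ∧
        ∀ h : H, Tendsto (fun n => v n h) atTop (𝓝 0)) :
    ∃ w : ℕ → ContinuousAddMonoidHom X 𝕋,
      (¬ ∃ N : ℕ, ∀ n ≥ N, w n = 0) ∧
        ∀ x : X, Tendsto (fun n => w n x) atTop (𝓝 0) := by
  let p : ContinuousAddMonoidHom X H :=
    (ContinuousAddMonoidHom.fst H Z).comp ⟨e.toAddMonoidHom, he⟩
  have hp : Function.Surjective p := fun h => ⟨h, congrArg Prod.fst (heH h)⟩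
  exact IsAutocharacterized.of_surjective p hp hH

/-- If `H` is an autocharacterized topological direct summand of `X`, then `X` is
autocharacterized. -/
theorem summand_autocharacterized (X : Type) [AddCommGroup X] [TopologicalSpace X]
    [IsTopologicalAddGroup X] (H Z : AddSubgroup X)
    (e : X ≃+ (H × Z)) (he : Continuous e) (he' : Continuous e.symm)
    (heH : ∀ h : H, e (h : X) = (h, 0))
    (hH : ∃ v : ℕ → ContinuousAddMonoidHom H 𝕋,
      (¬ ∃ N : ℕ, ∀ n ≥ N, v n = 0) ∧
        ∀ h : H, Tendsto (fun n => v n h) atTop (𝓝 0)) :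
    ∃ w : ℕ → ContinuousAddMonoidHom X 𝕋,
      (¬ ∃ N : ℕ, ∀ n ≥ N, w n = 0) ∧
        ∀ x : X, Tendsto (fun n => w n x) atTop (𝓝 0) :=
  summand_autocharacterized_general X H Z e he heH hH
end

section
/- For every natural number m ≥ 2 and every a ∈ T = R/Z with ‖a‖ < 1/m², there exists b ∈ T such that mb = a and ‖kb‖ > 1/m² for every integer k with 1 ≤ k < m. -/
namespace AddCircle

variable {p : ℝ}

theorem exists_coe_eq_abs_eq_norm (a : AddCircle p) :
    ∃ x : ℝ, (x : AddCircle p) = a ∧ |x| = ‖a‖ := by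
  obtain ⟨y, rfl⟩ := QuotientAddGroup.mk_surjective a
  refine ⟨y - round (p⁻¹ * y) * p, ?_, (norm_eq p).symm⟩
  rw [coe_sub, sub_eq_self, ← zsmul_eq_mul, coe_zsmul, coe_period, zsmul_zero]

theorem exists_nsmul_eq_norm_le (a : AddCircle p) {n : ℕ} (hn : n ≠ 0) :
    ∃ b : AddCircle p, n • b = a ∧ n * ‖b‖ ≤ ‖a‖ := by
  obtain ⟨x, rfl, hx⟩ := exists_coe_eq_abs_eq_norm a
  have hn' : (n : ℝ) ≠ 0 := Nat.cast_ne_zero.mpr hn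
  refine ⟨((x / n : ℝ) : AddCircle p), ?_, ?_⟩
  · rw [← coe_nsmul, nsmul_eq_mul, mul_div_cancel₀ _ hn']
  · calc (n : ℝ) * ‖((x / n : ℝ) : AddCircle p)‖ ≤ n * |x / n| :=
          mul_le_mul_of_nonneg_left QuotientAddGroup.norm_mk_le_norm n.cast_nonneg
      _ = ‖(x : AddCircle p)‖ := by rw [abs_div, Nat.abs_cast, mul_div_cancel₀ _ hn', hx]

variable [Fact (0 < p)]

theorem div_le_norm_of_nsmul_eq_zero {u : AddCircle p} {n : ℕ} (hn : 0 < n) (h : n • u = 0)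
    (hu : u ≠ 0) : p / n ≤ ‖u‖ := by
  have hle : p ≤ n * ‖u‖ := by
    calc p ≤ addOrderOf u • ‖u‖ := le_add_order_smul_norm_of_isOfFinAddOrder
          (isOfFinAddOrder_iff_nsmul_eq_zero.mpr ⟨n, hn, h⟩) hu
      _ ≤ n * ‖u‖ := by
        rw [nsmul_eq_mul]
        gcongr
        exact addOrderOf_le_of_nsmul_eq_zero hn h
  rwa [div_le_iff₀' (by exact_mod_cast hn)]

end AddCircle

theorem one_div_sq_add_mul_lt_one_div {m k t : ℝ} (hk : 1 ≤ k) (hkm : k ≤ m - 1) (ht : 0 ≤ t)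
    (hmt : m * t < 1 / m ^ 2) : 1 / m ^ 2 + k * t < 1 / m := by
  have hm : 0 < m := by linarith
  have ht' : t < 1 / m ^ 3 := by
    rw [lt_div_iff₀ (by positivity)]
    rw [lt_div_iff₀ (by positivity)] at hmt
    linarith
  calc 1 / m ^ 2 + k * t ≤ 1 / m ^ 2 + (m - 1) * t := by gcongr
    _ < 1 / m ^ 2 + (m - 1) * (1 / m ^ 3) := by gcongr; linarith
    _ ≤ 1 / m := by
      have : 1 / m - (1 / m ^ 2 + (m - 1) * (1 / m ^ 3)) = (m - 1) ^ 2 / m ^ 3 := by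
        field_simp
        ring
      linarith [show 0 ≤ (m - 1) ^ 2 / m ^ 3 by positivity]

/-- Division trick in `𝕋`: every `a` with `‖a‖ < 1/m²` has an `m`-th divisor `b` all of
whose proper multiples `kb`, `1 ≤ k < m`, satisfy `‖kb‖ > 1/m²`. -/
theorem exists_good_division (m : ℕ) (hm : 2 ≤ m) (a : 𝕋)
    (ha : ‖a‖ < 1 / (m : ℝ) ^ 2) :
    ∃ b : 𝕋, m • b = a ∧ ∀ k : ℕ, 1 ≤ k → k < m → 1 / (m : ℝ) ^ 2 < ‖k • b‖ := by
  have hm0 : 0 < m := by omega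
  obtain ⟨b₀, rfl, hb₀⟩ := AddCircle.exists_nsmul_eq_norm_le a hm0.ne'
  set c : 𝕋 := ((1 / m : ℝ) : 𝕋)
  have hc_order : addOrderOf c = m := AddCircle.addOrderOf_period_div hm0
  have hc : m • c = 0 := hc_order ▸ addOrderOf_nsmul_eq_zero c
  refine ⟨b₀ + c, by rw [nsmul_add, hc, add_zero], fun k hk hkm => ?_⟩
  have hkc : 1 / m ≤ ‖k • c‖ := by
    refine AddCircle.div_le_norm_of_nsmul_eq_zero hm0 (by rw [smul_comm, hc, smul_zero]) ?_
    exact nsmul_ne_zero_of_lt_addOrderOf (by omega) (hc_order ▸ hkm)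
  have hkb₀ : ‖k • b₀‖ ≤ k * ‖b₀‖ := norm_nsmul_le
  have hsum : 1 / (m : ℝ) ^ 2 + k * ‖b₀‖ < 1 / m :=
    one_div_sq_add_mul_lt_one_div (by exact_mod_cast hk)
      (by rw [le_sub_iff_add_le]; exact_mod_cast hkm) (norm_nonneg b₀) (hb₀.trans_lt ha)
  calc 1 / (m : ℝ) ^ 2 < ‖k • c‖ - ‖k • b₀‖ := by linarith
    _ ≤ ‖k • (b₀ + c)‖ := by
      rw [nsmul_add, add_comm]
      simpa using norm_sub_norm_le (k • c) (-(k • b₀))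
end

section
/- Let X be a topological abelian group and H a subgroup of X. Then H is of the form n_v(X) = ⋂_n ker v_n for some sequence v of continuous characters of X if and only if H is closed and there exists a continuous injective homomorphism from X/H (with the quotient topology) into T^N. -/
open Filter Topology

/-!
A family `v` of continuous characters is the same thing as one continuous homomorphism
`x ↦ (v n x)ₙ` into `𝕋^ℕ`, whose kernel is `⋂ ker vₙ`. A homomorphism factors injectively through
`X ⧸ H` exactly when its kernel is `H`, and the quotient topology makes the factorization
continuous. Closedness comes for free, since points of `𝕋` are closed.
-/

theorem AddMonoidHom.coe_ker_pi {X ι : Type*} {G : ι → Type*} [AddGroup X]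
    [∀ i, AddZeroClass (G i)] (g : ∀ i, X →+ G i) :
    (AddMonoidHom.ker (AddMonoidHom.pi g) : Set X) = ⋂ i, g i ⁻¹' {0} := by
  ext x
  simp [funext_iff]

section

variable {X G ι : Type*} [AddGroup X] [TopologicalSpace X] [AddGroup G] [TopologicalSpace G]
  {H : AddSubgroup X} [H.Normal]

theorem exists_continuous_injective_of_eq_iInter_ker (v : ι → ContinuousAddMonoidHom X G)
    (hv : (H : Set X) = ⋂ i, v i ⁻¹' {0}) :
    ∃ f : (X ⧸ H) →+ (ι → G), Continuous f ∧ Function.Injective f := by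
  set φ := AddMonoidHom.pi fun i => (v i : X →+ G)
  have hH : H = φ.ker := SetLike.coe_injective (hv.trans (AddMonoidHom.coe_ker_pi _).symm)
  refine ⟨QuotientAddGroup.lift H φ hH.le, ?_, (QuotientAddGroup.injective_lift_iff H φ _).mpr hH⟩
  rw [(QuotientAddGroup.isQuotientMap_mk H).continuous_iff]
  exact continuous_pi fun i => (v i).continuous

theorem exists_eq_iInter_ker_of_injective (f : (X ⧸ H) →+ (ι → G)) (hf : Continuous f)
    (hinj : Function.Injective f) :
    ∃ v : ι → ContinuousAddMonoidHom X G, (H : Set X) = ⋂ i, v i ⁻¹' {0} := by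
  set φ := f.comp (QuotientAddGroup.mk' H)
  have hφ : Continuous φ := hf.comp QuotientAddGroup.continuous_mk
  refine ⟨fun i => ⟨(Pi.evalAddMonoidHom (fun _ => G) i).comp φ,
    (continuous_apply i).comp hφ⟩, ?_⟩
  have hH : (H : Set X) = φ.ker := by
    rw [AddMonoidHom.ker_comp_of_injective _ _ hinj, QuotientAddGroup.ker_mk']
  rw [hH]
  exact AddMonoidHom.coe_ker_pi fun i => (Pi.evalAddMonoidHom (fun _ => G) i).comp φ

end

theorem N_characterized_iff_general (X : Type) [AddCommGroup X] [TopologicalSpace X]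
    (H : AddSubgroup X) :
    (∃ v : ℕ → ContinuousAddMonoidHom X 𝕋, (H : Set X) = ⋂ n : ℕ, (v n) ⁻¹' {0}) ↔
      (IsClosed (H : Set X) ∧
        ∃ f : (X ⧸ H) →+ (ℕ → 𝕋), Continuous f ∧ Function.Injective f) := by
  constructor
  · rintro ⟨v, hv⟩
    refine ⟨?_, exists_continuous_injective_of_eq_iInter_ker v hv⟩
    rw [hv]
    exact isClosed_iInter fun n => isClosed_singleton.preimage (v n).continuous
  · rintro ⟨-, f, hf, hinj⟩
    exact exists_eq_iInter_ker_of_injective f hf hinj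

/-- `H` is `N`-characterized iff it is closed and `X/H` injects continuously into `𝕋^ℕ`. -/
theorem N_characterized_iff (X : Type) [AddCommGroup X] [TopologicalSpace X]
    [IsTopologicalAddGroup X] (H : AddSubgroup X) :
    (∃ v : ℕ → ContinuousAddMonoidHom X 𝕋, (H : Set X) = ⋂ n : ℕ, (v n) ⁻¹' {0}) ↔
      (IsClosed (H : Set X) ∧
        ∃ f : (X ⧸ H) →+ (ℕ → 𝕋), Continuous f ∧ Function.Injective f) :=
  N_characterized_iff_general X H
end
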